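/- Let P be a path with an odd number of vertices, let L be a list assignment on P with |L(x)| = 4 for every vertex x, and let W be a set of 4 colours. Then at most two of the six 2-element subsets p of W satisfy dam_{L,P}(p, p) > S_L(P) − 2|V(P)| (i.e., P has at most 2 bad W-sets). -/

import Mathlib

/-- Given the lists `L(v_1), …, L(v_n)` of a path (as a list of finsets, in order) and a
"previous" set, the sequence `X_1 = L(v_1)`, `X_i = L(v_i) \ X_{i-1}`. -/
def Xseq : Finset ℕ → List (Finset ℕ) → List (Finset ℕ)
  | _, [] => []
  | prev, l :: ls => (l \ prev) :: Xseq (l \ prev) ls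

/-- `S_L(P) = Σ_{i=1}^n |X_i|`. -/
def SL (ls : List (Finset ℕ)) : ℕ := ((Xseq ∅ ls).map Finset.card).sum

/-- `X_{i+1}` (0-indexed access to the sequence `X_1, …, X_n`). -/
def Xat (ls : List (Finset ℕ)) (i : ℕ) : Finset ℕ := (Xseq ∅ ls).getD i ∅

/-- `A = ∩_{x ∈ V(P)} L(x)`. -/
def Aset : List (Finset ℕ) → Finset ℕ
  | [] => ∅
  | a :: rest => rest.foldl (· ∩ ·) a

/-- For a colour `c`, the least 0-indexed position `i` with `c ∉ L(v_{i+1})`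
(so the paper's `f(c)` is `firstMissing + 1`). -/
noncomputable def firstMissing (ls : List (Finset ℕ)) (c : ℕ) : ℕ :=
  sInf {i | i < ls.length ∧ c ∉ ls.getD i ∅}

open Classical in
/-- `X̂_1 = { c ∈ L(v_1) \ A : f(c) is even }` (with the paper's 1-indexed `f`,
i.e. `firstMissing` is odd). -/
noncomputable def hatX1 (ls : List (Finset ℕ)) : Finset ℕ :=
  (ls.getD 0 ∅ \ Aset ls).filter fun c => Odd (firstMissing ls c)

/-- `X̂_n = X_n \ A`. -/
def hatXn (ls : List (Finset ℕ)) : Finset ℕ := Xat ls (ls.length - 1) \ Aset ls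

/-- `L[p,q]`: delete the colours of `p` from `L(v_1)` and the colours of `q` from `L(v_n)`. -/
def delEnds (p q : Finset ℕ) (ls : List (Finset ℕ)) : List (Finset ℕ) :=
  ((ls.modifyHead (· \ p)).reverse.modifyHead (· \ q)).reverse

/-- The damage `dam_{L,P}(p,q) = S_L(P) − S_{L[p,q]}(P)` (as an integer). -/
def damZ (ls : List (Finset ℕ)) (p q : Finset ℕ) : ℤ :=
  (SL ls : ℤ) - SL (delEnds p q ls)

/-- The path `v_1 ⋯ v_n` with lists `L(v_1), …, L(v_n)` admits a `b`-tuple list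
colouring: consecutive vertices receive disjoint `b`-subsets of their lists. -/
def PathListColorable (b : ℕ) (ls : List (Finset ℕ)) : Prop :=
  ∃ f : ℕ → Finset ℕ,
    (∀ i, i < ls.length → f i ⊆ ls.getD i ∅ ∧ (f i).card = b) ∧
    (∀ i, i + 1 < ls.length → Disjoint (f i) (f (i + 1)))

/-! Write `n = 2m + 1`. Deleting `p` from the two end lists changes each `X_i`, `i < n - 1`, only
by the colours of `p` lying in all of `L(v_1), …, L(v_{i+1})`, which are alternately removed and
added; summing over colours gives `dam(p, p) = |p ∩ X̂_1| + |p ∩ X_n|`. Pairing consecutive `X_i`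
bounds `S_L(P)` below by `2n + 2`, and (since `S_{L[q,q]}(P) ≥ 2n - 2` for every `q`) by
`|X̂_1| + |X_n| + 2n - 2`. So a bad set `p` has `|p ∩ X̂_1| + |p ∩ X_n| ≥ 3` and misses at most one
element of `X̂_1` and `X_n` together, and at most two 2-sets can do that. -/

open Finset

lemma sum_neg_one_pow_mul_ite_lt {N t : ℕ} (h : t ≤ N) :
    ∑ i ∈ range N, (-1 : ℤ) ^ i * (if i < t then 1 else 0) = if Even t then 0 else 1 := by
  rw [← neg_one_geom_sum, ← sum_subset (range_subset_range.2 h) fun i _ hi => by simp_all]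
  exact sum_congr rfl fun i hi => by simp_all

section counting

variable {α : Type*} [DecidableEq α]

lemma subset_of_card_inter_add_card_inter {D E p : Finset α} (hDE : D ⊆ E) (hp : #p = 2)
    (h3 : 3 ≤ #(p ∩ D) + #(p ∩ E)) (h1 : #D + #E ≤ #(p ∩ D) + #(p ∩ E) + 1) :
    D.Nonempty ∧ D ⊆ p ∧ p ⊆ E ∧ #E ≤ 3 := by
  have hDE' : #(p ∩ D) ≤ #(p ∩ E) := card_le_card (inter_subset_inter_left hDE)
  have hE2 : #(p ∩ E) ≤ 2 := hp ▸ card_le_card inter_subset_left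
  have hpE : p ∩ E = p := eq_of_subset_of_card_le inter_subset_left (by omega)
  have hsdiff : #(D \ p) ≤ #(E \ p) := card_le_card (sdiff_subset_sdiff hDE le_rfl)
  have hD := card_sdiff_add_card_inter D p
  have hE := card_sdiff_add_card_inter E p
  rw [inter_comm] at hD hE
  refine ⟨(card_pos.1 (show 0 < #(p ∩ D) by omega)).mono inter_subset_right, ?_,
    inter_eq_left.1 hpE, by omega⟩
  exact sdiff_eq_empty_iff_subset.1 (card_eq_zero.1 (by omega))

lemma card_filter_le_two_of_subset (D E W : Finset α) (hDE : D ⊆ E) :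
    #{p ∈ W.powersetCard 2 |
      3 ≤ #(p ∩ D) + #(p ∩ E) ∧ #D + #E ≤ #(p ∩ D) + #(p ∩ E) + 1} ≤ 2 := by
  set S := {p ∈ W.powersetCard 2 | 3 ≤ #(p ∩ D) + #(p ∩ E) ∧ #D + #E ≤ #(p ∩ D) + #(p ∩ E) + 1}
  have hS : ∀ p ∈ S, D.Nonempty ∧ D ⊆ p ∧ p ⊆ E ∧ #E ≤ 3 ∧ #p = 2 := fun p hp => by
    obtain ⟨hpW, h3, h1⟩ := mem_filter.1 hp
    have hp2 := (mem_powersetCard.1 hpW).2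
    obtain ⟨hD, hDp, hpE, hE⟩ := subset_of_card_inter_add_card_inter hDE hp2 h3 h1
    exact ⟨hD, hDp, hpE, hE, hp2⟩
  rcases S.eq_empty_or_nonempty with hempty | ⟨p₀, hp₀⟩
  · simp [hempty]
  obtain ⟨⟨d, hd⟩, -, -, hE, -⟩ := hS p₀ hp₀
  have hsub : S ⊆ (E.erase d).image fun x => {d, x} := fun p hp => by
    obtain ⟨-, hDp, hpE, -, hp2⟩ := hS p hp
    have hdp : d ∈ p := hDp hd
    obtain ⟨x, hx⟩ := card_eq_one.1 (show #(p.erase d) = 1 by rw [card_erase_of_mem hdp, hp2])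
    have hxp : x ∈ p.erase d := hx ▸ mem_singleton_self x
    refine mem_image.2 ⟨x, mem_erase.2 ⟨ne_of_mem_erase hxp, hpE (mem_of_mem_erase hxp)⟩, ?_⟩
    rw [← hx, insert_erase hdp]
  calc #S ≤ #((E.erase d).image fun x => {d, x}) := card_le_card hsub
    _ ≤ #(E.erase d) := card_image_le
    _ ≤ 2 := by rw [card_erase_of_mem (hDE hd)]; omega

lemma card_filter_le_two (B H W : Finset α) :
    #{p ∈ W.powersetCard 2 |
      3 ≤ #(p ∩ B) + #(p ∩ H) ∧ #B + #H ≤ #(p ∩ B) + #(p ∩ H) + 1} ≤ 2 := by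
  have hsplit : ∀ X : Finset α, #(X ∩ B) + #(X ∩ H) = #(X ∩ (B ∩ H)) + #(X ∩ (B ∪ H)) :=
    fun X => by
      rw [← card_union_add_card_inter, ← inter_union_distrib_left, ← inter_inter_distrib_left,
        add_comm]
  have hBH : #B + #H = #(B ∩ H) + #(B ∪ H) := by rw [← card_union_add_card_inter, add_comm]
  simpa only [hsplit, hBH] using card_filter_le_two_of_subset (B ∩ H) (B ∪ H) W inter_subset_union

end counting

section Xseq

variable (ls : List (Finset ℕ))

lemma Xseq_length (prev : Finset ℕ) : (Xseq prev ls).length = ls.length := by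
  induction ls generalizing prev with
  | nil => rfl
  | cons a t ih => simp [Xseq, ih]

lemma Xat_zero : Xat ls 0 = ls.getD 0 ∅ := by
  cases ls <;> simp [Xat, Xseq]

lemma Xat_succ {i : ℕ} (h : i + 1 < ls.length) :
    Xat ls (i + 1) = ls.getD (i + 1) ∅ \ Xat ls i := by
  suffices ∀ prev, (Xseq prev ls).getD (i + 1) ∅ = ls.getD (i + 1) ∅ \ (Xseq prev ls).getD i ∅ from
    this ∅
  induction ls generalizing i with
  | nil => simp at h
  | cons a t ih =>
    intro prev
    cases t with
    | nil => simp at h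
    | cons b t =>
      cases i with
      | zero => simp [Xseq]
      | succ j => simpa [Xseq] using ih (i := j) (by simpa using h) (a \ prev)

lemma SL_eq_sum : SL ls = ∑ i ∈ range ls.length, #(Xat ls i) := by
  rw [SL, ← Fin.sum_univ_fun_getElem, Finset.sum_range]
  exact Fintype.sum_equiv (finCongr (Xseq_length ls ∅)) _ _ fun i => by
    simp [Xat]

lemma mem_Xat_iff_even {c i : ℕ} (hi : i < ls.length) (hc : ∀ j ≤ i, c ∈ ls.getD j ∅) :
    c ∈ Xat ls i ↔ Even i := by
  induction i with
  | zero => simpa [Xat_zero] using hc 0 le_rfl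
  | succ i ih =>
    rw [Xat_succ ls hi, mem_sdiff, ih (by omega) fun j hj => hc j (by omega), Nat.even_add_one]
    have := hc (i + 1) le_rfl
    tauto

end Xseq

section firstMissing

variable {ls : List (Finset ℕ)} {c : ℕ}

lemma mem_Aset_iff (h : ls ≠ []) : c ∈ Aset ls ↔ ∀ i < ls.length, c ∈ ls.getD i ∅ := by
  obtain ⟨a, t, rfl⟩ := List.exists_cons_of_ne_nil h
  suffices ∀ b, c ∈ t.foldl (· ∩ ·) b ↔ c ∈ b ∧ ∀ x ∈ t, c ∈ x by
    rw [Aset, this, List.forall_mem_iff_getElem, List.length_cons, Nat.forall_lt_succ_left]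
    simp +contextual
  induction t with
  | nil => simp
  | cons x t ih => intro b; simp [ih, and_assoc]

lemma firstMissing_spec (hne : ls ≠ []) (hc : c ∉ Aset ls) :
    firstMissing ls c < ls.length ∧ c ∉ ls.getD (firstMissing ls c) ∅ := by
  rw [mem_Aset_iff hne] at hc
  push Not at hc
  exact Nat.sInf_mem hc

lemma lt_firstMissing_iff (hc : c ∉ Aset ls) {i : ℕ} (hi : i < ls.length) :
    i < firstMissing ls c ↔ ∀ j ≤ i, c ∈ ls.getD j ∅ := by
  refine ⟨fun h j hj => ?_, fun h => ?_⟩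
  · by_contra hcj
    exact Nat.notMem_of_lt_sInf (lt_of_le_of_lt hj h) ⟨by omega, hcj⟩
  · by_contra! hle
    exact (firstMissing_spec (List.ne_nil_of_length_pos (by omega)) hc).2 (h _ hle)

end firstMissing

lemma delEnds_length (p q : Finset ℕ) (ls : List (Finset ℕ)) :
    (delEnds p q ls).length = ls.length := by
  simp [delEnds]

lemma getD_delEnds (p q : Finset ℕ) {ls : List (Finset ℕ)} {i : ℕ} (hi : i < ls.length) :
    (delEnds p q ls).getD i ∅ =
      (ls.getD i ∅ \ if i = 0 then p else ∅) \ if i = ls.length - 1 then q else ∅ := by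
  rw [List.getD_eq_getElem _ _ (by rwa [delEnds_length]), List.getD_eq_getElem _ _ hi]
  have hrev : ls.length - 1 - (ls.length - 1 - i) = i := by omega
  simp only [delEnds, List.getElem_reverse, List.getElem_modifyHead, List.length_reverse,
    List.length_modifyHead, hrev]
  split_ifs <;> first | omega | simp_all

def interPrefix (ls : List (Finset ℕ)) (p : Finset ℕ) (i : ℕ) : Finset ℕ :=
  p.filter fun c => ∀ j ≤ i, c ∈ ls.getD j ∅

section damage

variable {ls : List (Finset ℕ)} {p : Finset ℕ}

@[simp]
lemma mem_interPrefix {i c : ℕ} : c ∈ interPrefix ls p i ↔ c ∈ p ∧ ∀ j ≤ i, c ∈ ls.getD j ∅ := by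
  simp [interPrefix]

lemma interPrefix_succ (i : ℕ) :
    interPrefix ls p (i + 1) = interPrefix ls p i ∩ ls.getD (i + 1) ∅ := by
  ext c
  simp [Nat.le_succ_iff, or_imp, forall_and, and_assoc]

lemma Xat_delEnds (q : Finset ℕ) {i : ℕ} (hi : i + 1 < ls.length) :
    Xat (delEnds p q ls) i =
      if Even i then Xat ls i \ interPrefix ls p i else Xat ls i ∪ interPrefix ls p i := by
  induction i with
  | zero =>
    rw [Xat_zero, getD_delEnds p q (by omega), Xat_zero, if_pos rfl,
      if_neg (show 0 ≠ ls.length - 1 by omega), sdiff_empty, if_pos (show Even 0 by decide)]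
    ext c
    simp only [mem_sdiff, mem_interPrefix, Nat.le_zero, forall_eq]
    tauto
  | succ i ih =>
    rw [Xat_succ _ (by rw [delEnds_length]; omega), getD_delEnds p q (by omega), ih (by omega),
      Xat_succ ls (by omega), interPrefix_succ, if_neg (by omega), if_neg (by omega)]
    rcases Nat.even_or_odd i with h | h
    · simp only [h, if_true, Nat.even_add_one, not_true, if_false]
      ext c; simp only [mem_sdiff, mem_union, mem_inter, sdiff_empty]; tauto
    · simp only [Nat.not_even_iff_odd.2 h, if_false, Nat.even_add_one, not_false_eq_true, if_true]
      ext c; simp only [mem_sdiff, mem_union, mem_inter, sdiff_empty]; tauto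

lemma interPrefix_subset_Xat {i : ℕ} (hi : i < ls.length) (he : Even i) :
    interPrefix ls p i ⊆ Xat ls i := fun _ hc =>
  (mem_Xat_iff_even ls hi (mem_interPrefix.1 hc).2).2 he

lemma disjoint_Xat_interPrefix {i : ℕ} (hi : i < ls.length) (ho : Odd i) :
    Disjoint (Xat ls i) (interPrefix ls p i) :=
  disjoint_right.2 fun _ hc hX =>
    Nat.not_even_iff_odd.2 ho ((mem_Xat_iff_even ls hi (mem_interPrefix.1 hc).2).1 hX)

lemma card_Xat_delEnds (q : Finset ℕ) {i : ℕ} (hi : i + 1 < ls.length) :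
    (#(Xat (delEnds p q ls) i) : ℤ) = #(Xat ls i) - (-1) ^ i * #(interPrefix ls p i) := by
  rw [Xat_delEnds q hi]
  rcases Nat.even_or_odd i with h | h
  · rw [if_pos h, card_sdiff_of_subset (interPrefix_subset_Xat (by omega) h),
      Nat.cast_sub (card_le_card (interPrefix_subset_Xat (by omega) h)), h.neg_one_pow, one_mul]
  · rw [if_neg (Nat.not_even_iff_odd.2 h),
      card_union_of_disjoint (disjoint_Xat_interPrefix (by omega) h), h.neg_one_pow]
    push_cast; ring

lemma Xat_delEnds_last {m : ℕ} (hn : ls.length = 2 * m + 1) :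
    Xat (delEnds p p ls) (2 * m) = Xat ls (2 * m) \ p := by
  cases m with
  | zero =>
    rw [Xat_zero, getD_delEnds p p (by omega), Xat_zero, if_pos rfl, if_pos (by omega)]
    simp
  | succ m =>
    have hodd : ¬Even (2 * m + 1) := by simp
    rw [show 2 * (m + 1) = 2 * m + 1 + 1 by ring, Xat_succ _ (by rw [delEnds_length]; omega),
      getD_delEnds p p (by omega), Xat_delEnds p (by omega), if_neg hodd,
      Xat_succ ls (i := 2 * m + 1) (by omega), if_neg (by omega), if_pos (by omega)]
    ext c
    simp only [mem_sdiff, mem_union, sdiff_empty, mem_interPrefix]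
    tauto

lemma mem_hatX1_iff {c : ℕ} (hne : ls ≠ []) :
    c ∈ hatX1 ls ↔ c ∉ Aset ls ∧ Odd (firstMissing ls c) := by
  simp only [hatX1, mem_filter, mem_sdiff]
  refine ⟨fun h => ⟨h.1.2, h.2⟩, fun ⟨hA, ho⟩ => ⟨⟨?_, hA⟩, ho⟩⟩
  exact (lt_firstMissing_iff hA (List.length_pos_iff.2 hne)).1 ho.pos 0 le_rfl

lemma sum_neg_one_pow_mul_ite_forall_mem {m : ℕ} (hn : ls.length = 2 * m + 1) (c : ℕ) :
    ∑ i ∈ range (2 * m), (-1 : ℤ) ^ i * (if ∀ j ≤ i, c ∈ ls.getD j ∅ then 1 else 0) =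
      if c ∈ hatX1 ls then 1 else 0 := by
  have hne : ls ≠ [] := List.ne_nil_of_length_pos (by omega)
  by_cases hA : c ∈ Aset ls
  · have hall : ∀ i < 2 * m, ∀ j ≤ i, c ∈ ls.getD j ∅ := fun i hi j hj =>
      (mem_Aset_iff hne).1 hA j (by omega)
    rw [if_neg fun h => ((mem_hatX1_iff hne).1 h).1 hA,
      sum_congr rfl fun i hi => by rw [if_pos (hall i (mem_range.1 hi)), mul_one],
      neg_one_geom_sum, if_pos (even_two_mul m)]
  · have hlt := (firstMissing_spec hne hA).1
    have hprefix : ∀ i ∈ range (2 * m),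
        (-1 : ℤ) ^ i * (if ∀ j ≤ i, c ∈ ls.getD j ∅ then 1 else 0) =
          (-1) ^ i * (if i < firstMissing ls c then 1 else 0) := fun i hi => by
      rw [if_congr (lt_firstMissing_iff hA (by simp at hi; omega)).symm rfl rfl]
    rw [sum_congr rfl hprefix, sum_neg_one_pow_mul_ite_lt (by omega)]
    simp [mem_hatX1_iff hne, hA, ← Nat.not_even_iff_odd]

lemma sum_neg_one_pow_mul_card_interPrefix {m : ℕ} (hn : ls.length = 2 * m + 1) :
    ∑ i ∈ range (2 * m), (-1 : ℤ) ^ i * #(interPrefix ls p i) = #(p ∩ hatX1 ls) := by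
  calc ∑ i ∈ range (2 * m), (-1 : ℤ) ^ i * #(interPrefix ls p i)
      = ∑ c ∈ p, ∑ i ∈ range (2 * m),
          (-1 : ℤ) ^ i * (if ∀ j ≤ i, c ∈ ls.getD j ∅ then 1 else 0) := by
        rw [sum_comm]
        simp only [interPrefix, card_filter, Nat.cast_sum, mul_sum, Nat.cast_ite, Nat.cast_one,
          Nat.cast_zero]
    _ = #(p ∩ hatX1 ls) := by
        simp only [sum_neg_one_pow_mul_ite_forall_mem hn]
        rw [sum_boole, filter_mem_eq_inter]

lemma damZ_self_eq {m : ℕ} (hn : ls.length = 2 * m + 1) (p : Finset ℕ) :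
    damZ ls p p = #(p ∩ hatX1 ls) + #(p ∩ Xat ls (2 * m)) := by
  have hsplit : ∀ l : List (Finset ℕ), l.length = 2 * m + 1 →
      (SL l : ℤ) = ∑ i ∈ range (2 * m), (#(Xat l i) : ℤ) + #(Xat l (2 * m)) := fun l hl => by
    rw [SL_eq_sum, hl, sum_range_succ]; push_cast; rfl
  have hlast :
      (#(Xat (delEnds p p ls) (2 * m)) : ℤ) = #(Xat ls (2 * m)) - #(p ∩ Xat ls (2 * m)) := by
    rw [Xat_delEnds_last hn, ← card_sdiff_add_card_inter (Xat ls (2 * m)) p, inter_comm]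
    push_cast; ring
  rw [damZ, hsplit ls hn, hsplit _ ((delEnds_length p p ls).trans hn), hlast,
    sum_congr rfl fun i hi => card_Xat_delEnds p (by simp at hi; omega), sum_sub_distrib,
    sum_neg_one_pow_mul_card_interPrefix hn]
  ring

end damage

section lowerBounds

variable {ls : List (Finset ℕ)}

lemma card_getD_succ_le {i : ℕ} (h : i + 1 < ls.length) :
    #(ls.getD (i + 1) ∅) ≤ #(Xat ls i) + #(Xat ls (i + 1)) := by
  rw [Xat_succ ls h]
  exact card_le_card_sdiff_add_card.trans_eq (add_comm _ _)

lemma sum_card_getD_le_sum_card_Xat (s : ℕ) {r : ℕ} (h : 2 * r + s ≤ ls.length) :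
    ∑ j ∈ range r, #(ls.getD (2 * j + s + 1) ∅) ≤ ∑ i ∈ range (2 * r), #(Xat ls (i + s)) := by
  induction r with
  | zero => simp
  | succ r ih =>
    rw [sum_range_succ, show 2 * (r + 1) = 2 * r + 1 + 1 by ring, sum_range_succ, sum_range_succ,
      show 2 * r + 1 + s = 2 * r + s + 1 by ring]
    have := card_getD_succ_le (ls := ls) (i := 2 * r + s) (by omega)
    have := ih (by omega)
    omega

lemma mul_succ_le_SL {m k : ℕ} (hn : ls.length = 2 * m + 1)
    (hcard : ∀ i < ls.length, k ≤ #(ls.getD i ∅)) :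
    k * (m + 1) ≤ SL ls := by
  have hpairs := sum_card_getD_le_sum_card_Xat (ls := ls) 1 (r := m) (by omega)
  have hlists : ∑ j ∈ range m, k ≤ ∑ j ∈ range m, #(ls.getD (2 * j + 1 + 1) ∅) :=
    sum_le_sum fun j hj => hcard _ (by simp at hj; omega)
  have hfirst : k ≤ #(Xat ls 0) := Xat_zero ls ▸ hcard 0 (by omega)
  rw [SL_eq_sum, hn, sum_range_succ']
  simp only [sum_const, card_range, smul_eq_mul] at hlists
  linarith

lemma mul_le_SL_delEnds {m k : ℕ} (hn : ls.length = 2 * m + 1)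
    (hcard : ∀ i < ls.length, k ≤ #(ls.getD i ∅)) (p q : Finset ℕ) :
    k * m ≤ SL (delEnds p q ls) := by
  have hlen := (delEnds_length p q ls).trans hn
  have hpairs := sum_card_getD_le_sum_card_Xat (ls := delEnds p q ls) 0 (r := m) (by omega)
  have hlists : ∑ j ∈ range m, k ≤ ∑ j ∈ range m, #((delEnds p q ls).getD (2 * j + 0 + 1) ∅) :=
    sum_le_sum fun j hj => by
      have hj : j < m := mem_range.1 hj
      rw [getD_delEnds p q (by omega), if_neg (by omega), if_neg (by omega), sdiff_empty,
        sdiff_empty]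
      exact hcard _ (by omega)
  rw [SL_eq_sum, hlen, sum_range_succ]
  simp only [sum_const, card_range, smul_eq_mul, add_zero] at hlists hpairs
  linarith

lemma card_hatX1_add_card_Xat_add_mul_le_SL {m k : ℕ} (hn : ls.length = 2 * m + 1)
    (hcard : ∀ i < ls.length, k ≤ #(ls.getD i ∅)) :
    #(hatX1 ls) + #(Xat ls (2 * m)) + k * m ≤ SL ls := by
  have hdam := damZ_self_eq hn (hatX1 ls ∪ Xat ls (2 * m))
  rw [damZ, inter_eq_right.2 subset_union_left, inter_eq_right.2 subset_union_right] at hdam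
  have := mul_le_SL_delEnds hn hcard (hatX1 ls ∪ Xat ls (2 * m)) (hatX1 ls ∪ Xat ls (2 * m))
  omega

end lowerBounds

theorem at_most_two_bad_sets_general (ls : List (Finset ℕ)) (hodd : Odd ls.length)
    (hcard : ∀ i, i < ls.length → (ls.getD i ∅).card = 4)
    (W : Finset ℕ) :
    ((Finset.powersetCard 2 W).filter
      (fun p => (SL ls : ℤ) - 2 * ls.length < damZ ls p p)).card ≤ 2 := by
  obtain ⟨m, hm⟩ := hodd
  have hcard4 : ∀ i < ls.length, 4 ≤ #(ls.getD i ∅) := fun i hi => (hcard i hi).ge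
  have hS := mul_succ_le_SL hm hcard4
  have hS' := card_hatX1_add_card_Xat_add_mul_le_SL hm hcard4
  refine (card_le_card (monotone_filter_right _ fun p _ hp => ?_)).trans
    (card_filter_le_two (hatX1 ls) (Xat ls (2 * m)) W)
  rw [damZ_self_eq hm] at hp
  omega

/-- Lemma `lem:twobad`: for a path with an odd number of vertices and lists of size 4,
and any set `W` of 4 colours, at most two of the six 2-element subsets `p ⊆ W` satisfy
`dam_{L,P}(p,p) > S_L(P) − 2|V(P)|`, i.e. there are at most 2 bad `W`-sets. -/
theorem at_most_two_bad_sets (ls : List (Finset ℕ)) (hodd : Odd ls.length)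
    (hcard : ∀ i, i < ls.length → (ls.getD i ∅).card = 4)
    (W : Finset ℕ) (hW : W.card = 4) :
    ((Finset.powersetCard 2 W).filter
      (fun p => (SL ls : ℤ) - 2 * ls.length < damZ ls p p)).card ≤ 2 :=
  at_most_two_bad_sets_general ls hodd hcard W
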